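/- arXiv:math/0609629 — 2 statements merged into one kernel-verified Lean document; each statement's English description precedes it below -/
import Mathlib

section
/- Assume C(A)_j ≤ 0 for all j = 1, …, n. Then: (1) for every 2 ≤ l ≤ n and every j ≤ l, C(A)^{(l)}_j ≤ 0; (2) for every 2 ≤ l ≤ n−1 and every i ≤ l, if C(A)^{(l+1)}_i < 0 then C(A)^{(l)}_i < 0. -/
/-- `A` is negative definite: `xᵀAx < 0` for every nonzero real vector `x`. -/
def NegDefQ {V : Type*} [Fintype V] (A : Matrix V V ℚ) : Prop :=
  ∀ x : V → ℝ, x ≠ 0 → ∑ i, ∑ j, x i * (A i j : ℝ) * x j < 0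

/-- Numerical Nash condition `NN_(i,j)`: for every rational vector `C` with nonpositive
entries there is an integer vector `X` with positive entries such that `(AX)_k ≤ C_k`
for all `k` and `X i < X j`. -/
def NashNN {V : Type*} [Fintype V] (A : Matrix V V ℚ) (i j : V) : Prop :=
  ∀ C : V → ℚ, (∀ k, C k ≤ 0) →
    ∃ X : V → ℤ, (∀ k, 0 < X k) ∧ (∀ k, ∑ t, A k t * (X t : ℚ) ≤ C k) ∧ X i < X j

/-- Condition `(NN)`: `NN_(i,j)` for every ordered pair of distinct indices. -/
def NashNNAll {V : Type*} [Fintype V] (A : Matrix V V ℚ) : Prop :=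
  ∀ i j : V, i ≠ j → NashNN A i j

/-- One step of Gauss elimination with pivot `p`. -/
def gaussStep (b : ℕ → ℕ → ℚ) (p : ℕ) : ℕ → ℕ → ℚ :=
  fun i j => b i j - b p i * b p j / b p p

/-- Iterated Gauss steps with pivots `n-1, n-2, …` (0-based). -/
def gaussIter (b : ℕ → ℕ → ℚ) (n : ℕ) : ℕ → ℕ → ℕ → ℚ
  | 0 => b
  | k + 1 => gaussStep (gaussIter b n k) (n - 1 - k)

/-- The entries of `A` as a function on `ℕ` (0-based), junk value `0` out of range. -/
def entries {n : ℕ} (A : Matrix (Fin n) (Fin n) ℚ) : ℕ → ℕ → ℚ :=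
  fun i j => if h : i < n ∧ j < n then A ⟨i, h.1⟩ ⟨j, h.2⟩ else 0

/-- `gaussSeq A l` is the Gauss sequence matrix `A^{(l)}` (0-based indices, so the
meaningful entries are those with indices `< l`; `gaussSeq A n = A`). -/
def gaussSeq {n : ℕ} (A : Matrix (Fin n) (Fin n) ℚ) (l : ℕ) : ℕ → ℕ → ℚ :=
  gaussIter (entries A) n (n - l)

/-- `CSum A l i = C(A)^{(l)}_{i+1} = ∑_{j=1}^{l} a^{(l)}_{i+1,j}` (0-based `i < l`). -/
def CSum {n : ℕ} (A : Matrix (Fin n) (Fin n) ℚ) (l i : ℕ) : ℚ :=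
  ∑ j ∈ Finset.range l, gaussSeq A l i j

open Finset

structure GoodMat (b : ℕ → ℕ → ℚ) (l : ℕ) : Prop where
  sym : ∀ i j, i < l → j < l → b i j = b j i
  off : ∀ i j, i < l → j < l → i ≠ j → 0 ≤ b i j
  qd : ∀ x : ℕ → ℝ, (∀ j, l ≤ j → x j = 0) → x ≠ 0 →
    ∑ i ∈ range l, ∑ j ∈ range l, x i * (b i j : ℝ) * x j < 0
  row : ∀ i, i < l → ∑ j ∈ range l, b i j ≤ 0

lemma GoodMat.diag {b : ℕ → ℕ → ℚ} {l : ℕ} (h : GoodMat b l) {i : ℕ} (hi : i < l) :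
    b i i < 0 := by
  have hR := h.qd (fun j => if j = i then 1 else 0) (fun j hj => by
      simp only [ite_eq_right_iff]; intro hji; omega)
    (by
      intro h0
      have := congrFun h0 i
      simp at this)
  have : ∑ i' ∈ range l, ∑ j ∈ range l,
      (if i' = i then (1:ℝ) else 0) * (b i' j : ℝ) * (if j = i then 1 else 0)
      = (b i i : ℝ) := by
    rw [Finset.sum_eq_single i]
    · rw [Finset.sum_eq_single i]
      · simp
      · intro j _ hji; simp [hji]
      · intro hi'; exact absurd (Finset.mem_range.mpr hi) hi'
    · intro j _ hji
      have : ∑ k ∈ range l, (if j = i then (1:ℝ) else 0) * (b j k : ℝ) * (if k = i then 1 else 0) = 0 := by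
        apply Finset.sum_eq_zero; intro k _; simp [hji]
      exact this
    · intro hi'; exact absurd (Finset.mem_range.mpr hi) hi' 
  rw [this] at hR
  exact_mod_cast hR

lemma rowsum_gaussStep {b : ℕ → ℕ → ℚ} {p : ℕ} (h : GoodMat b (p+1)) {i : ℕ} (hi : i < p) :
    ∑ j ∈ range p, gaussStep b p i j
      = ∑ j ∈ range (p+1), b i j - b p i * (∑ j ∈ range (p+1), b p j) / b p p := by
  have hpp : b p p < 0 := h.diag (Nat.lt_succ_self p)
  have hip : b i p = b p i := h.sym i p (by omega) (by omega)
  have h1 : ∑ j ∈ range p, gaussStep b p i j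
      = ∑ j ∈ range p, b i j - b p i * (∑ j ∈ range p, b p j) / b p p := by
    rw [Finset.mul_sum, Finset.sum_div, ← Finset.sum_sub_distrib]
    refine Finset.sum_congr rfl fun j _ => ?_
    simp only [gaussStep]
  have hne : b p p ≠ 0 := ne_of_lt hpp
  rw [h1, Finset.sum_range_succ, Finset.sum_range_succ, hip]
  field_simp
  ring

lemma rowsum_gaussStep_le {b : ℕ → ℕ → ℚ} {p : ℕ} (h : GoodMat b (p+1)) {i : ℕ} (hi : i < p) :
    ∑ j ∈ range p, gaussStep b p i j ≤ ∑ j ∈ range (p+1), b i j := by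
  rw [rowsum_gaussStep h hi]
  have hpp : b p p < 0 := h.diag (Nat.lt_succ_self p)
  have h1 : 0 ≤ b p i := h.off p i (by omega) (by omega) (by omega)
  have h2 : ∑ j ∈ range (p+1), b p j ≤ 0 := h.row p (by omega)
  have : 0 ≤ b p i * (∑ j ∈ range (p+1), b p j) / b p p :=
    by rw [div_eq_mul_inv]
       have := mul_nonpos_of_nonneg_of_nonpos h1 h2
       have := inv_nonpos.mpr hpp.le
       nlinarith
  linarith

lemma GoodMat.step {b : ℕ → ℕ → ℚ} {p : ℕ} (h : GoodMat b (p+1)) :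
    GoodMat (gaussStep b p) p := by
  have hpp : b p p < 0 := h.diag (Nat.lt_succ_self p)
  have hppR : ((b p p : ℚ) : ℝ) < 0 := by exact_mod_cast hpp
  have hppR0 : ((b p p : ℚ) : ℝ) ≠ 0 := ne_of_lt hppR
  refine ⟨?_, ?_, ?_, ?_⟩
  · intro i j hi hj
    have hs := h.sym i j (by omega) (by omega)
    simp only [gaussStep, hs]; ring
  · intro i j hi hj hij
    have h1 : 0 ≤ b p i := h.off p i (by omega) (by omega) (by omega)
    have h2 : 0 ≤ b p j := h.off p j (by omega) (by omega) (by omega)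
    have h3 : 0 ≤ b i j := h.off i j (by omega) (by omega) hij
    have h4 : b p i * b p j / b p p ≤ 0 :=
      div_nonpos_of_nonneg_of_nonpos (mul_nonneg h1 h2) hpp.le
    simp only [gaussStep]; linarith
  · intro x hsupp hx
    set s : ℝ := ∑ j ∈ range p, (b p j : ℝ) * x j with hs
    set y : ℕ → ℝ := fun j => if j = p then -s / (b p p : ℝ) else x j with hy
    have hysupp : ∀ j, p + 1 ≤ j → y j = 0 := by
      intro j hj
      have hjp : j ≠ p := by omega
      simp [hy, hjp, hsupp j (by omega)]
    have hyne : y ≠ 0 := by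
      obtain ⟨j, hj⟩ := Function.ne_iff.mp hx
      have hjp : j < p := by
        by_contra h'
        exact hj (hsupp j (not_lt.mp h'))
      intro h0
      apply hj
      have := congrFun h0 j
      simpa [hy, Nat.ne_of_lt hjp] using this
    have hq := h.qd y hysupp hyne
    have hyx : ∀ j, j < p → y j = x j := fun j hj => by
      simp [hy, Nat.ne_of_lt hj]
    have hyp : y p = -s / (b p p : ℝ) := by simp [hy]
    have symR : ∀ i, i < p → ((b i p : ℚ) : ℝ) = ((b p i : ℚ) : ℝ) := fun i hi => by
      rw [h.sym i p (by omega) (by omega)]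
    have key : ∑ i ∈ range (p+1), ∑ j ∈ range (p+1), y i * (b i j : ℝ) * y j
        = (∑ i ∈ range p, ∑ j ∈ range p, x i * (b i j : ℝ) * x j) - s * s / (b p p : ℝ) := by
      rw [Finset.sum_range_succ]
      have hrow : ∀ i ∈ range p, ∑ j ∈ range (p+1), y i * (b i j : ℝ) * y j
          = (∑ j ∈ range p, x i * (b i j : ℝ) * x j) + (b p i : ℝ) * x i * y p := by
        intro i hi
        have hip := Finset.mem_range.mp hi
        rw [Finset.sum_range_succ, hyx i hip, symR i hip]
        congr 1
        · exact Finset.sum_congr rfl fun j hj => by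
            rw [hyx j (Finset.mem_range.mp hj)]
        · ring
      rw [Finset.sum_congr rfl hrow, Finset.sum_add_distrib]
      have hlast : ∑ j ∈ range (p+1), y p * (b p j : ℝ) * y j
          = y p * s + y p * (b p p : ℝ) * y p := by
        rw [Finset.sum_range_succ]
        congr 1
        rw [hs, Finset.mul_sum]
        exact Finset.sum_congr rfl fun j hj => by
          rw [hyx j (Finset.mem_range.mp hj)]; ring
      rw [hlast]
      have hcross : ∑ i ∈ range p, (b p i : ℝ) * x i * y p = s * y p := by
        rw [hs, Finset.sum_mul]
      rw [hcross, hyp]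
      field_simp
      ring
    have target : ∑ i ∈ range p, ∑ j ∈ range p, x i * (gaussStep b p i j : ℝ) * x j
        = (∑ i ∈ range p, ∑ j ∈ range p, x i * (b i j : ℝ) * x j) - s * s / (b p p : ℝ) := by
      have hsplit : ∀ i ∈ range p, ∑ j ∈ range p, x i * (gaussStep b p i j : ℝ) * x j
          = (∑ j ∈ range p, x i * (b i j : ℝ) * x j)
            - ((b p i : ℝ) * x i) * (s / (b p p : ℝ)) := by
        intro i _
        have : ∀ j ∈ range p, x i * (gaussStep b p i j : ℝ) * x j
            = x i * (b i j : ℝ) * x j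
              - ((b p i : ℝ) * x i) * (((b p j : ℝ) * x j) / (b p p : ℝ)) := by
          intro j _
          simp only [gaussStep]
          push_cast
          ring
        rw [Finset.sum_congr rfl this, Finset.sum_sub_distrib]
        congr 1
        rw [hs, Finset.sum_div, Finset.mul_sum]
      rw [Finset.sum_congr rfl hsplit, Finset.sum_sub_distrib]
      congr 1
      have e : ∑ i ∈ range p, (b p i : ℝ) * x i * (s / (b p p : ℝ))
          = s * (s / (b p p : ℝ)) := by
        rw [← Finset.sum_mul, hs]
      rw [e, mul_div_assoc]
    rw [target, ← key]
    exact hq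
  · intro i hi
    rw [rowsum_gaussStep h hi]
    have hpl : p < p + 1 := Nat.lt_succ_self p
    have h1 : 0 ≤ b p i := h.off p i hpl (by omega) (by omega)
    have h2 : ∑ j ∈ range (p+1), b p j ≤ 0 := h.row p hpl
    have h3 : ∑ j ∈ range (p+1), b i j ≤ 0 := h.row i (by omega)
    have : 0 ≤ b p i * (∑ j ∈ range (p+1), b p j) / b p p :=
      by rw [div_eq_mul_inv]
         have := mul_nonpos_of_nonneg_of_nonpos h1 h2
         have := inv_nonpos.mpr hpp.le
         nlinarith
    linarith


lemma goodMat_gaussIter (b : ℕ → ℕ → ℚ) (n : ℕ) (h : GoodMat b n) :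
    ∀ k, k ≤ n → GoodMat (gaussIter b n k) (n - k) := by
  intro k
  induction k with
  | zero => intro _; simpa [gaussIter] using h
  | succ k ih =>
    intro hk
    have hg := ih (by omega)
    rw [show n - k = (n - 1 - k) + 1 by omega] at hg
    have := hg.step
    rw [show n - (k + 1) = n - 1 - k by omega]
    exact this

lemma goodMat_entries {n : ℕ} (A : Matrix (Fin n) (Fin n) ℚ)
    (hsym : ∀ i j, A i j = A j i)
    (hoff : ∀ i j, i ≠ j → 0 ≤ A i j) (hneg : NegDefQ A)
    (hC : ∀ j, ∑ t, A j t ≤ 0) : GoodMat (entries A) n := by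
  refine ⟨?_, ?_, ?_, ?_⟩
  · intro i j hi hj
    simp only [entries, dif_pos (And.intro hi hj), dif_pos (And.intro hj hi)]
    exact hsym _ _
  · intro i j hi hj hij
    simp only [entries, dif_pos (And.intro hi hj)]
    exact hoff _ _ (by simp [Fin.ext_iff, hij])
  · intro x hsupp hx
    have hform : ∀ i j : Fin n, ((entries A i j : ℚ) : ℝ) = ((A i j : ℚ) : ℝ) := by
      intro i j
      simp [entries, i.isLt, j.isLt]
    have hx' : (fun i : Fin n => x i.val) ≠ 0 := by
      intro h0
      apply hx
      funext j
      by_cases hj : j < n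
      · exact congrFun h0 ⟨j, hj⟩
      · exact hsupp j (by omega)
    have := hneg (fun i : Fin n => x i.val) hx'
    calc ∑ i ∈ Finset.range n, ∑ j ∈ Finset.range n, x i * (entries A i j : ℝ) * x j
        = ∑ i : Fin n, ∑ j : Fin n, x i.val * (A i j : ℝ) * x j.val := by
          rw [← Fin.sum_univ_eq_sum_range (fun i => ∑ j ∈ Finset.range n, x i * (entries A i j : ℝ) * x j)]
          refine Finset.sum_congr rfl fun i _ => ?_
          rw [← Fin.sum_univ_eq_sum_range (fun j => x i.val * (entries A i.val j : ℝ) * x j)]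
          refine Finset.sum_congr rfl fun j _ => ?_
          rw [hform i j]
      _ < 0 := this
  · intro i hi
    have := hC ⟨i, hi⟩
    calc ∑ j ∈ Finset.range n, entries A i j
        = ∑ j : Fin n, entries A i j.val := (Fin.sum_univ_eq_sum_range _ _).symm
      _ = ∑ j : Fin n, A ⟨i, hi⟩ j := by
          refine Finset.sum_congr rfl fun j _ => ?_
          simp [entries, hi, j.isLt]
      _ ≤ 0 := this

theorem csum_nonpos_stable (n : ℕ) (hn : 2 ≤ n) (A : Matrix (Fin n) (Fin n) ℚ)
    (hsym : ∀ i j, A i j = A j i) (hdiag : ∀ i, A i i < 0)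
    (hoff : ∀ i j, i ≠ j → 0 ≤ A i j) (hneg : NegDefQ A)
    (hC : ∀ j, ∑ t, A j t ≤ 0) :
    (∀ l : ℕ, 2 ≤ l → l ≤ n → ∀ j : ℕ, j < l → CSum A l j ≤ 0) ∧
    (∀ l : ℕ, 2 ≤ l → l ≤ n - 1 → ∀ i : ℕ, i < l →
      CSum A (l + 1) i < 0 → CSum A l i < 0) := by
  have base : GoodMat (entries A) n := goodMat_entries A hsym hoff hneg hC
  have good : ∀ l, l ≤ n → GoodMat (gaussSeq A l) l := by
    intro l hl
    have := goodMat_gaussIter (entries A) n base (n - l) (by omega)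
    rw [show n - (n - l) = l by omega] at this
    exact this
  constructor
  · intro l _ hl j hj
    exact (good l hl).row j hj
  · intro l hl2 hl i hi hlt
    have hl1 : l + 1 ≤ n := by omega
    have hg : GoodMat (gaussSeq A (l+1)) (l+1) := good (l+1) hl1
    have hstep : gaussSeq A l = gaussStep (gaussSeq A (l+1)) l := by
      show gaussIter (entries A) n (n - l) = _
      rw [show n - l = (n - (l+1)) + 1 by omega]
      show gaussStep (gaussIter (entries A) n (n - (l+1))) (n - 1 - (n - (l+1))) = _
      rw [show n - 1 - (n - (l+1)) = l by omega]
      rfl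
    have hle : CSum A l i ≤ CSum A (l+1) i := by
      unfold CSum
      rw [hstep]
      exact rowsum_gaussStep_le hg hi
    linarith
end

section
/- Assume n ≥ 3, the dual graph Γ of A is a cycle (Γ is connected and every vertex is adjacent to exactly two other vertices), and C(A)_i ≤ 0 for all i. Then A satisfies (NN) if and only if there exist at least two indices i with C(A)_i < 0. -/
/-- The dual graph of `A`: edge between distinct `i, j` iff `A i j > 0`. -/
def dualGraph {V : Type*} (A : Matrix V V ℚ) : SimpleGraph V :=
  SimpleGraph.fromRel fun i j => 0 < A i j

/-- A leaf of a graph: a vertex adjacent to exactly one other vertex. -/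
def IsLeaf {V : Type*} (G : SimpleGraph V) (i : V) : Prop :=
  ∃! j, G.Adj i j

/-!
A negative definite matrix `A` with nonnegative off-diagonal entries satisfies a maximum
principle: if `(A y)_k ≤ 0` wherever `y k < 0`, then `y ≥ 0` (test the quadratic form on the
negative part of `y`).

If every row sum except the `j`-th vanishes, the maximum principle applied to `X - X j` shows
`X j ≤ X i` whenever `A X ≤ 0`, so `NN_(i,j)` fails; and some row sum is negative because
`1ᵀ A 1 < 0`. Conversely let `A u = -e_j`. Then `0 ≤ u ≤ u j`, and if `u i = u j` the zero set
of `u j - u` contains `i` and `j` and is closed under adjacency away from `j`. In a cycle such a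
set is everything, which forces every row sum except the `j`-th to vanish. Hence `u i < u j`, and
`z + s u` with `A z = -1` and `s` large is a positive vector with `A (z + s u) < 0` that is larger
at `j` than at `i`; clearing denominators and scaling it gives `NN_(i,j)`.
-/

open Finset Matrix

namespace SimpleGraph

variable {V : Type*} {G : SimpleGraph V}

theorem Reachable.exists_adj_mem_notMem {S : Set V} {u v : V} (h : G.Reachable u v)
    (hu : u ∈ S) (hv : v ∉ S) : ∃ x ∈ S, ∃ y ∉ S, G.Adj x y := by
  obtain ⟨p⟩ := h
  obtain ⟨d, -, hd, hd'⟩ := p.exists_boundary_dart S hu hv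
  exact ⟨d.fst, hd, d.snd, hd', d.adj⟩

theorem isCycles_of_forall_adj_iff
    (h : ∀ i, ∃ j k, j ≠ k ∧ ∀ m, G.Adj i m ↔ m = j ∨ m = k) : G.IsCycles := by
  intro v _
  obtain ⟨j, k, hjk, hadj⟩ := h v
  have : G.neighborSet v = {j, k} := by
    ext m
    simp [hadj]
  rw [this, Set.ncard_pair hjk]

theorem IsCycles.eq_univ_of_forall_adj_mem_of_ne [Finite V] (hcyc : G.IsCycles)
    (hconn : G.Connected) {Z : Set V} {j p : V} (hj : j ∈ Z) (hp : p ∈ Z) (hpj : p ≠ j)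
    (hZ : ∀ k ∈ Z, k ≠ j → ∀ t, G.Adj k t → t ∈ Z) : Z = Set.univ := by
  refine Set.eq_univ_of_forall fun v => by_contra fun hv => ?_
  have hexit : ∀ x ∈ Z, ∀ y ∉ Z, G.Adj x y → x = j :=
    fun x hx y hy hxy => by_contra fun hxj => hy (hZ x hx hxj y hxy)
  obtain ⟨x, hx, c, hc, hxc⟩ := (hconn p v).exists_adj_mem_notMem hp hv
  obtain rfl := hexit x hx c hc hxc
  -- `x` gets three neighbours: `c ∉ Z`, `b ∈ Z`, and `d ∉ Z` with `d ≠ c` because the edge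
  -- `xc` of a union of cycles is not a bridge
  obtain ⟨b, ⟨hbZ, hbx⟩, x', hx', hbx'⟩ :=
    (hconn p x).exists_adj_mem_notMem (S := Z \ {x}) ⟨hp, hpj⟩ (by simp)
  obtain rfl : x' = x := by_contra fun h => hx' ⟨hZ b hbZ hbx x' hbx', h⟩
  obtain ⟨y, hy, d, hd, hyd⟩ := (hcyc.reachable_deleteEdges hxc).exists_adj_mem_notMem hx hc
  rw [deleteEdges_adj] at hyd
  obtain rfl := hexit y hy d hd hyd.1
  have hdc : c ≠ d := by
    rintro rfl
    exact hyd.2 rfl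
  have hbc : c ≠ b := fun h => hc (h ▸ hbZ)
  obtain ⟨w, -, hw⟩ := hcyc.existsUnique_ne_adj hxc
  exact hd ((hw d ⟨hdc, hyd.1⟩).trans (hw b ⟨hbc, hbx'.symm⟩).symm ▸ hbZ)

end SimpleGraph

section

variable {V : Type*} {A : Matrix V V ℚ} {y : V → ℚ} {k : V}

theorem pos_of_dualGraph_adj (hsym : ∀ i j, A i j = A j i) {k t : V}
    (h : (dualGraph A).Adj k t) : 0 < A k t := by
  rw [dualGraph, SimpleGraph.fromRel_adj] at h
  exact h.2.elim id fun h => hsym k t ▸ h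

theorem mul_apply_nonneg_of_apply_eq_zero (hoff : ∀ i j, i ≠ j → 0 ≤ A i j) (hy : 0 ≤ y)
    (hk : y k = 0) (t : V) : 0 ≤ A k t * y t := by
  rcases eq_or_ne k t with rfl | hkt
  · simp [hk]
  · exact mul_nonneg (hoff k t hkt) (hy t)

variable [Fintype V]

theorem NegDefQ.dotProduct_mulVec_neg (hA : NegDefQ A) {x : V → ℚ} (hx : x ≠ 0) :
    x ⬝ᵥ (A *ᵥ x) < 0 := by
  have hx' : (fun k => (x k : ℝ)) ≠ 0 :=
    fun h => hx (funext fun k => by simpa using congr_fun h k)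
  have hxAx : x ⬝ᵥ (A *ᵥ x) = ∑ i, ∑ j, x i * A i j * x j := by
    simp only [dotProduct, mulVec, mul_sum, mul_assoc]
  rw [hxAx]
  exact_mod_cast hA _ hx'

theorem NegDefQ.exists_sum_neg [Nonempty V] (hA : NegDefQ A) : ∃ i, ∑ t, A i t < 0 := by
  have h := hA.dotProduct_mulVec_neg (x := 1) one_ne_zero
  simp only [mulVec, dotProduct] at h
  obtain ⟨i, -, hi⟩ := exists_lt_of_sum_lt (s := univ) (f := fun i => ∑ t, A i t)
    (g := fun _ => 0) (by simpa using h)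
  exact ⟨i, hi⟩

theorem NegDefQ.mulVec_surjective [DecidableEq V] (hA : NegDefQ A) :
    Function.Surjective A.mulVec := by
  refine mulVec_surjective_iff_isUnit.2 (mulVec_injective_iff_isUnit.1 fun x y hxy => ?_)
  by_contra hne
  have h := hA.dotProduct_mulVec_neg (sub_ne_zero.2 hne)
  rw [mulVec_sub, hxy, sub_self, dotProduct_zero] at h
  exact h.false

theorem mulVec_apply_nonneg_of_apply_eq_zero (hoff : ∀ i j, i ≠ j → 0 ≤ A i j) (hy : 0 ≤ y)
    (hk : y k = 0) : 0 ≤ (A *ᵥ y) k :=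
  sum_nonneg fun t _ => mul_apply_nonneg_of_apply_eq_zero hoff hy hk t

theorem apply_eq_zero_of_mulVec_apply_nonpos (hoff : ∀ i j, i ≠ j → 0 ≤ A i j) (hy : 0 ≤ y)
    (hk : y k = 0) (h : (A *ᵥ y) k ≤ 0) {t : V} (ht : 0 < A k t) : y t = 0 := by
  have hsum := le_antisymm h (mulVec_apply_nonneg_of_apply_eq_zero hoff hy hk)
  have hkt := (sum_eq_zero_iff_of_nonneg fun t _ =>
    mul_apply_nonneg_of_apply_eq_zero hoff hy hk t).1 hsum t (mem_univ t)
  exact (mul_eq_zero.1 hkt).resolve_left ht.ne'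

theorem pos_of_mulVec_apply_neg (hoff : ∀ i j, i ≠ j → 0 ≤ A i j) (hy : 0 ≤ y)
    (h : (A *ᵥ y) k < 0) : 0 < y k :=
  (hy k).lt_of_ne fun hk => (mulVec_apply_nonneg_of_apply_eq_zero hoff hy hk.symm).not_gt h

theorem NegDefQ.nonneg_of_mulVec_apply_nonpos (hA : NegDefQ A)
    (hoff : ∀ i j, i ≠ j → 0 ≤ A i j) (hy : ∀ k, y k < 0 → (A *ᵥ y) k ≤ 0) : 0 ≤ y := by
  set n : V → ℚ := fun k => max (-y k) 0 with hn
  have hterm : ∀ k, 0 ≤ n k * (A *ᵥ n) k := by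
    intro k
    rcases lt_or_ge (y k) 0 with hk | hk
    · -- `n ≥ -y` with equality at `k`, so `(A n)_k ≥ -(A y)_k ≥ 0`
      have hle : (A *ᵥ -y) k ≤ (A *ᵥ n) k := by
        refine sum_le_sum fun t _ => ?_
        rcases eq_or_ne k t with rfl | hkt
        · simp [hn, hk.le]
        · exact mul_le_mul_of_nonneg_left (le_max_left _ _) (hoff k t hkt)
      rw [mulVec_neg, Pi.neg_apply] at hle
      exact mul_nonneg (le_max_right _ _) (by linarith [hy k hk])
    · simp [hn, hk]
  have hn0 : n = 0 := by_contra fun h =>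
    (hA.dotProduct_mulVec_neg h).not_ge (sum_nonneg fun k _ => hterm k)
  intro k
  simpa [hn] using congr_fun hn0 k

theorem NegDefQ.nonneg_of_mulVec_nonpos (hA : NegDefQ A) (hoff : ∀ i j, i ≠ j → 0 ≤ A i j)
    (hy : A *ᵥ y ≤ 0) : 0 ≤ y :=
  hA.nonneg_of_mulVec_apply_nonpos hoff fun k _ => hy k

theorem NegDefQ.pos_of_mulVec_neg (hA : NegDefQ A) (hoff : ∀ i j, i ≠ j → 0 ≤ A i j)
    (hy : ∀ k, (A *ᵥ y) k < 0) (k : V) : 0 < y k :=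
  pos_of_mulVec_apply_neg hoff (hA.nonneg_of_mulVec_nonpos hoff fun k => (hy k).le) (hy k)

theorem mulVec_smul_one_apply (c : ℚ) (k : V) : (A *ᵥ (c • 1)) k = c * ∑ t, A k t := by
  simp [mulVec, dotProduct, mul_sum, mul_comm]

theorem NegDefQ.not_nashNN_of_sum_eq_zero (hA : NegDefQ A) (hoff : ∀ i j, i ≠ j → 0 ≤ A i j)
    {i j : V} (hrow : ∀ k, k ≠ j → ∑ t, A k t = 0) : ¬ NashNN A i j := by
  intro h
  obtain ⟨X, -, hAX, hX⟩ := h 0 fun _ => le_rfl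
  set x : V → ℚ := fun k => X k
  have hy := hA.nonneg_of_mulVec_apply_nonpos hoff (y := x - x j • 1) fun k hk => by
    have hkj : k ≠ j := by
      rintro rfl
      simp at hk
    rw [mulVec_sub, Pi.sub_apply, mulVec_smul_one_apply, hrow k hkj, mul_zero, sub_zero]
    exact hAX k
  have hji : (X j : ℚ) ≤ X i := by simpa [x] using hy i
  exact hX.not_ge (by exact_mod_cast hji)

theorem exists_nat_gt_mul_int (v : V → ℚ) (m : ℕ) :
    ∃ d : ℕ, m < d ∧ ∀ k, ∃ z : ℤ, (z : ℚ) = d * v k := by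
  have hD : 0 < ∏ k, (v k).den := prod_pos fun k _ => (v k).den_pos
  refine ⟨(m + 1) * ∏ k, (v k).den, by nlinarith, fun k => ?_⟩
  obtain ⟨e, he⟩ := dvd_prod_of_mem (fun k => (v k).den) (mem_univ k)
  refine ⟨(m + 1) * e * (v k).num, ?_⟩
  rw [he]
  push_cast
  rw [← Rat.mul_den_eq_num]
  ring

theorem nashNN_of_mulVec_neg {v : V → ℚ} (hv : ∀ k, 0 < v k) (hAv : ∀ k, (A *ᵥ v) k < 0)
    {i j : V} (hij : v i < v j) : NashNN A i j := by
  intro C _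
  obtain ⟨M, hM⟩ := Finite.exists_le fun k => C k / (A *ᵥ v) k
  obtain ⟨m, hm⟩ := exists_nat_ge M
  obtain ⟨d, hmd, hdv⟩ := exists_nat_gt_mul_int v m
  choose X hX using hdv
  have hd : (0 : ℚ) < d := by exact_mod_cast (Nat.zero_le m).trans_lt hmd
  have hXv : (fun k => (X k : ℚ)) = (d : ℚ) • v := funext hX
  refine ⟨X, fun k => ?_, fun k => ?_, ?_⟩
  · have : (0 : ℚ) < X k := hX k ▸ mul_pos hd (hv k)
    exact_mod_cast this
  · change (A *ᵥ fun k => (X k : ℚ)) k ≤ C k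
    rw [hXv, mulVec_smul, Pi.smul_apply, smul_eq_mul, ← div_le_iff_of_neg (hAv k)]
    exact (hM k).trans (hm.trans (by exact_mod_cast hmd.le))
  · have : (X i : ℚ) < X j := by
      rw [hX, hX]
      exact mul_lt_mul_of_pos_left hij hd
    exact_mod_cast this

variable [DecidableEq V] {u : V → ℚ} {j : V}

theorem NegDefQ.nonneg_of_mulVec_eq_neg_single (hA : NegDefQ A)
    (hoff : ∀ i j, i ≠ j → 0 ≤ A i j) (hu : A *ᵥ u = -Pi.single j 1) : 0 ≤ u :=
  hA.nonneg_of_mulVec_nonpos hoff (by simp [hu, Pi.single_nonneg])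

theorem NegDefQ.nashNN_of_mulVec_eq_neg_single (hA : NegDefQ A)
    (hoff : ∀ i j, i ≠ j → 0 ≤ A i j) (hu : A *ᵥ u = -Pi.single j 1) {i : V}
    (hij : u i < u j) : NashNN A i j := by
  obtain ⟨z, hz⟩ := hA.mulVec_surjective (-1)
  obtain ⟨s, hs⟩ := exists_nat_gt ((z i - z j) / (u j - u i))
  rw [div_lt_iff₀ (sub_pos.2 hij)] at hs
  have hAv : ∀ k, (A *ᵥ (z + (s : ℚ) • u)) k < 0 := by
    intro k
    have hj : (0 : V → ℚ) ≤ Pi.single j 1 := Pi.single_nonneg.2 zero_le_one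
    have := mul_nonneg s.cast_nonneg (hj k)
    simp only [mulVec_add, mulVec_smul, hz, hu, Pi.add_apply, Pi.smul_apply, Pi.neg_apply,
      Pi.one_apply, smul_eq_mul]
    linarith
  refine nashNN_of_mulVec_neg (hA.pos_of_mulVec_neg hoff hAv) hAv ?_
  simp only [Pi.add_apply, Pi.smul_apply, smul_eq_mul]
  linarith

theorem mulVec_smul_one_sub_apply (hu : A *ᵥ u = -Pi.single j 1) {k : V} (hk : k ≠ j) :
    (A *ᵥ (u j • 1 - u)) k = u j * ∑ t, A k t := by
  simp [mulVec_sub, mulVec_smul_one_apply, hu, hk]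

theorem NegDefQ.apply_le_of_mulVec_eq_neg_single (hA : NegDefQ A)
    (hoff : ∀ i j, i ≠ j → 0 ≤ A i j) (hC : ∀ k, ∑ t, A k t ≤ 0)
    (hu : A *ᵥ u = -Pi.single j 1) (k : V) : u k ≤ u j := by
  have hu0 := hA.nonneg_of_mulVec_eq_neg_single hoff hu
  have hy := hA.nonneg_of_mulVec_apply_nonpos hoff (y := u j • 1 - u) fun k hk => by
    have hkj : k ≠ j := by
      rintro rfl
      simp at hk
    rw [mulVec_smul_one_sub_apply hu hkj]
    exact mul_nonpos_of_nonneg_of_nonpos (hu0 j) (hC k)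
  simpa using hy k

theorem NegDefQ.apply_lt_of_isCycles (hA : NegDefQ A) (hoff : ∀ i j, i ≠ j → 0 ≤ A i j)
    (hC : ∀ k, ∑ t, A k t ≤ 0) (hcyc : (dualGraph A).IsCycles)
    (hconn : (dualGraph A).Connected) (hadj : ∀ k t, (dualGraph A).Adj k t → 0 < A k t)
    {r : V} (hrj : r ≠ j) (hr : ∑ t, A r t < 0) (hu : A *ᵥ u = -Pi.single j 1) {i : V}
    (hij : i ≠ j) : u i < u j := by
  have hu0 := hA.nonneg_of_mulVec_eq_neg_single hoff hu
  have huj : 0 < u j := pos_of_mulVec_apply_neg hoff hu0 (by simp [hu])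
  refine (hA.apply_le_of_mulVec_eq_neg_single hoff hC hu i).lt_of_ne fun hui => ?_
  set y := u j • 1 - u with hy
  have hy0 : 0 ≤ y := fun k => by
    simpa [hy] using hA.apply_le_of_mulVec_eq_neg_single hoff hC hu k
  have hZ : ∀ k ∈ {k | y k = 0}, k ≠ j → ∀ t, (dualGraph A).Adj k t → t ∈ {k | y k = 0} :=
    fun k hk hkj t hkt => apply_eq_zero_of_mulVec_apply_nonpos hoff hy0 hk
      (by
        rw [mulVec_smul_one_sub_apply hu hkj]
        exact mul_nonpos_of_nonneg_of_nonpos huj.le (hC k))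
      (hadj k t hkt)
  have hy_eq : y = 0 := funext fun k => Set.eq_univ_iff_forall.1
    (hcyc.eq_univ_of_forall_adj_mem_of_ne hconn (by simp [hy]) (by simp [hy, hui]) hij hZ) k
  have hr0 := mulVec_smul_one_sub_apply hu hrj
  rw [← hy, hy_eq, mulVec_zero] at hr0
  exact (mul_neg_of_pos_of_neg huj hr).ne hr0.symm

end

theorem cycle_NN_iff_general (n : ℕ) (A : Matrix (Fin n) (Fin n) ℚ)
    (hsym : ∀ i j, A i j = A j i)
    (hoff : ∀ i j, i ≠ j → 0 ≤ A i j) (hneg : NegDefQ A)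
    (hconn : (dualGraph A).Connected)
    (hcycle : ∀ i : Fin n, ∃ j k : Fin n, j ≠ k ∧
      ∀ m : Fin n, (dualGraph A).Adj i m ↔ (m = j ∨ m = k))
    (hC : ∀ i, ∑ j, A i j ≤ 0) :
    NashNNAll A ↔ ∃ i j : Fin n, i ≠ j ∧ ∑ t, A i t < 0 ∧ ∑ t, A j t < 0 := by
  have := hconn.nonempty
  constructor
  · intro hNN
    obtain ⟨p, hp⟩ := hneg.exists_sum_neg
    by_contra! hrow
    obtain ⟨q, _, -, hq⟩ := hcycle p
    have hpq : p ≠ q := (dualGraph A).ne_of_adj ((hq q).2 (Or.inl rfl))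
    exact hneg.not_nashNN_of_sum_eq_zero hoff
      (fun k hk => (hC k).antisymm (hrow p k hk.symm hp)) (hNN q p hpq.symm)
  · rintro ⟨p, q, hpq, hp, hq⟩ i j hij
    obtain ⟨r, hrj, hr⟩ : ∃ r, r ≠ j ∧ ∑ t, A r t < 0 := by
      by_cases hpj : p = j
      · exact ⟨q, hpj ▸ hpq.symm, hq⟩
      · exact ⟨p, hpj, hp⟩
    obtain ⟨u, hu⟩ := hneg.mulVec_surjective (-Pi.single j 1)
    exact hneg.nashNN_of_mulVec_eq_neg_single hoff hu
      (hneg.apply_lt_of_isCycles hoff hC (SimpleGraph.isCycles_of_forall_adj_iff hcycle) hconn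
        (fun _ _ => pos_of_dualGraph_adj hsym) hrj hr hu hij)

theorem cycle_NN_iff (n : ℕ) (hn : 3 ≤ n) (A : Matrix (Fin n) (Fin n) ℚ)
    (hsym : ∀ i j, A i j = A j i) (hdiag : ∀ i, A i i < 0)
    (hoff : ∀ i j, i ≠ j → 0 ≤ A i j) (hneg : NegDefQ A)
    (hconn : (dualGraph A).Connected)
    (hcycle : ∀ i : Fin n, ∃ j k : Fin n, j ≠ k ∧
      ∀ m : Fin n, (dualGraph A).Adj i m ↔ (m = j ∨ m = k))
    (hC : ∀ i, ∑ j, A i j ≤ 0) :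
    NashNNAll A ↔ ∃ i j : Fin n, i ≠ j ∧ ∑ t, A i t < 0 ∧ ∑ t, A j t < 0 :=
  cycle_NN_iff_general n A hsym hoff hneg hconn hcycle hC
end
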